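/- Let n ≥ 2 and m ≥ 1 be integers and let P(t) = (-1)^{n-1} + Σ_{i=1}^{n-1}(-1)^{n-i-1}(t^i+t^{-i}) - Σ_{k=1}^{m}(t^{n+3k-2}+t^{-(n+3k-2)}) + Σ_{k=1}^{m}(t^{n+3k-1}+t^{-(n+3k-1)}) be the symmetrized Alexander polynomial of K_{n,m}, with coefficients a_j (so P(t) = Σ_j a_j t^j). Define the torsion coefficients t_i = Σ_{j>0} j·a_{|i|+j}. Then for 0 ≤ i ≤ n-2: t_i = m + (n-i)/2 if n-i is even, and t_i = m + (n-i-1)/2 if n-i is odd; and for i = n+3k+ε with ε ∈ {-1,0,1} and 0 ≤ k ≤ m-1: t_i = m-k. -/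

import Mathlib

open LaurentPolynomial Finset

/-!
The torsion sum `p ↦ Σ_{j=1}^{N} j·p_{i+j}` is additive in `p`, and for `i ≥ 0` a symmetric
pair `t^s + t^{-s}` contributes `max (s - i) 0`. So the terms `±(t^j + t^{-j})`, `j < n`, give
the alternating sum `Σ_j (-1)^{n-1-j} max (j - i) 0 = ⌈(n-1-i)/2⌉`, while each pair
`-t^{n+3k-2} + t^{n+3k-1}` (with its mirror image) contributes `1` if `i ≤ n+3k-2` and `0`
otherwise; summing over `k` counts the `k ∈ [1, m]` with `i ≤ n+3k-2`.
-/

namespace LaurentPolynomial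

/-- For `i ≥ 0` and `N` at least the degree of `p`, this is the torsion coefficient `t_i`
of `p`. -/
noncomputable def torsionSum (N i : ℤ) : ℤ[T;T⁻¹] →+ ℤ where
  toFun p := ∑ j ∈ Icc 1 N, j * p.coeff (i + j)
  map_zero' := by simp
  map_add' p q := by simp [AddMonoidAlgebra.coeff_add, mul_add, sum_add_distrib]

lemma torsionSum_apply (N i : ℤ) (p : ℤ[T;T⁻¹]) :
    torsionSum N i p = ∑ j ∈ Icc 1 N, j * p.coeff (i + j) := rfl

lemma torsionSum_T (N i s : ℤ) :
    torsionSum N i (T s) = if 1 ≤ s - i ∧ s - i ≤ N then s - i else 0 := by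
  have hs : ∀ j, s = i + j ↔ j = s - i := fun j => by omega
  simp [torsionSum, hs]

lemma torsionSum_T_of_le {N i s : ℤ} (hs : s - i ≤ N) :
    torsionSum N i (T s) = max (s - i) 0 := by
  rw [torsionSum_T]
  split_ifs <;> omega

lemma torsionSum_T_add_T_neg {N i s : ℤ} (hi : 0 ≤ i) (hs : 0 ≤ s) (hsN : s ≤ N) :
    torsionSum N i (T s + T (-s)) = max (s - i) 0 := by
  rw [map_add, torsionSum_T_of_le (by omega), torsionSum_T_of_le (by omega)]
  omega

end LaurentPolynomial

lemma sum_neg_one_pow_mul_max_sub {c M : ℕ} (hcM : c ≤ M) :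
    ∑ j ∈ Icc 1 M, (-1 : ℤ) ^ (M - j) * max ((j : ℤ) - c) 0 = ((M - c + 1) / 2 : ℕ) := by
  obtain ⟨L, rfl⟩ := Nat.exists_eq_add_of_le hcM
  induction L with
  | zero =>
    rw [show (c + 0 - c + 1) / 2 = 0 by omega, Nat.cast_zero]
    refine sum_eq_zero fun j hj => ?_
    rw [mem_Icc] at hj
    rw [max_eq_right (by omega), mul_zero]
  | succ L ih =>
    rw [← add_assoc, sum_Icc_succ_top (by omega), Nat.sub_self, pow_zero, one_mul]
    have hflip : ∀ j ∈ Icc 1 (c + L), (-1 : ℤ) ^ (c + L + 1 - j) * max ((j : ℤ) - c) 0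
        = -((-1 : ℤ) ^ (c + L - j) * max ((j : ℤ) - c) 0) := fun j hj => by
      rw [mem_Icc] at hj
      rw [Nat.sub_add_comm hj.2, pow_succ]
      ring
    rw [sum_congr rfl hflip, sum_neg_distrib, ih (by omega)]
    push_cast
    omega

noncomputable def alexanderK (n m : ℕ) : ℤ[T;T⁻¹] :=
  (-1 : LaurentPolynomial ℤ) ^ (n - 1)
    + ∑ i ∈ Icc 1 (n - 1), (-1 : LaurentPolynomial ℤ) ^ (n - i - 1) *
        (T (i : ℤ) + T (-(i : ℤ)))
    - ∑ k ∈ Icc 1 m, (T ((n : ℤ) + 3 * k - 2) + T (-((n : ℤ) + 3 * k - 2)))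
    + ∑ k ∈ Icc 1 m, (T ((n : ℤ) + 3 * k - 1) + T (-((n : ℤ) + 3 * k - 1)))

lemma torsionSum_alexanderK {n m : ℕ} {i : ℤ} (hi : 0 ≤ i) :
    torsionSum (n + 3 * m) i (alexanderK n m) =
      ∑ j ∈ Icc 1 (n - 1), (-1 : ℤ) ^ (n - 1 - j) * max ((j : ℤ) - i) 0
        + #({k ∈ Icc 1 m | i + 2 ≤ (n : ℤ) + 3 * k} : Finset ℕ) := by
  have hsign (e : ℕ) (p : ℤ[T;T⁻¹]) : (-1) ^ e * p = (-1 : ℤ) ^ e • p := by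
    rw [zsmul_eq_mul]; push_cast; rfl
  have hpair (s : ℤ) (hs : 0 ≤ s) (hsN : s ≤ n + 3 * m) :=
    torsionSum_T_add_T_neg (N := n + 3 * m) hi hs hsN
  have hconst : (-1 : ℤ[T;T⁻¹]) ^ (n - 1) = (-1 : ℤ) ^ (n - 1) • T 0 := by
    rw [T_zero, ← hsign, mul_one]
  rw [alexanderK, hconst]
  simp only [hsign, map_add (torsionSum _ _) (_ - _), map_add (torsionSum _ _) (_ • _),
    map_sub, map_sum, map_zsmul]
  rw [torsionSum_T_of_le (by omega), max_eq_right (by omega), smul_zero, zero_add,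
    sub_add_eq_add_sub, add_sub_assoc, ← sum_sub_distrib]
  congr 1
  · refine sum_congr rfl fun j hj => ?_
    rw [mem_Icc] at hj
    rw [hpair j (by omega) (by omega), smul_eq_mul, Nat.sub_right_comm]
  · rw [natCast_card_filter]
    refine sum_congr rfl fun k hk => ?_
    rw [mem_Icc] at hk
    rw [hpair _ (by omega) (by omega), hpair _ (by omega) (by omega)]
    split_ifs <;> omega

theorem stmt_13_general (n m : ℕ) (hn : 2 ≤ n)
    (P : LaurentPolynomial ℤ)
    (hP : P = ((-1 : LaurentPolynomial ℤ)) ^ (n - 1)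
        + ∑ i ∈ Icc 1 (n - 1), (-1 : LaurentPolynomial ℤ) ^ (n - i - 1) *
            (T (i : ℤ) + T (-(i : ℤ)))
        - ∑ k ∈ Icc 1 m, (T ((n : ℤ) + 3 * k - 2) + T (-((n : ℤ) + 3 * k - 2)))
        + ∑ k ∈ Icc 1 m, (T ((n : ℤ) + 3 * k - 1) + T (-((n : ℤ) + 3 * k - 1))))
    (a : ℤ → ℤ) (ha : ∀ j, a j = P.coeff j)
    (tor : ℤ → ℤ)
    (htor : ∀ i, tor i = ∑ j ∈ Icc (1 : ℤ) ((n : ℤ) + 3 * m), j * a (|i| + j)) :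
    (∀ i : ℤ, 0 ≤ i → i ≤ (n : ℤ) - 2 →
      (Even ((n : ℤ) - i) → tor i = m + ((n : ℤ) - i) / 2) ∧
      (Odd ((n : ℤ) - i) → tor i = m + ((n : ℤ) - i - 1) / 2)) ∧
    (∀ k ε : ℤ, 0 ≤ k → k ≤ (m : ℤ) - 1 → ε ∈ ({-1, 0, 1} : Set ℤ) →
      tor ((n : ℤ) + 3 * k + ε) = m - k) := by
  have htor_eq (i : ℤ) (hi : 0 ≤ i) : tor i = torsionSum (n + 3 * m) i (alexanderK n m) := by
    rw [htor, abs_of_nonneg hi, torsionSum_apply, alexanderK, ← hP]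
    simp only [ha]
  refine ⟨fun i hi0 hin => ?_, fun k ε hk0 hkm hε => ?_⟩
  · lift i to ℕ using hi0
    have hall : ({k ∈ Icc 1 m | (i : ℤ) + 2 ≤ n + 3 * k} : Finset ℕ) = Icc 1 m :=
      filter_true_of_mem fun k hk => by rw [mem_Icc] at hk; omega
    rw [htor_eq _ (Nat.cast_nonneg i), torsionSum_alexanderK (Nat.cast_nonneg i),
      sum_neg_one_pow_mul_max_sub (by omega), hall, Nat.card_Icc]
    refine ⟨fun h => ?_, fun h => ?_⟩
    · rw [Int.even_iff] at h; omega
    · rw [Int.odd_iff] at h; omega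
  · lift k to ℕ using hk0
    have hε' : -1 ≤ ε ∧ ε ≤ 1 := by rcases hε with rfl | rfl | rfl <;> norm_num
    have hbeyond : ∑ j ∈ Icc 1 (n - 1),
        (-1 : ℤ) ^ (n - 1 - j) * max ((j : ℤ) - (n + 3 * k + ε)) 0 = 0 :=
      sum_eq_zero fun j hj => by
        rw [mem_Icc] at hj
        rw [max_eq_right (by omega), mul_zero]
    have htail : ({k' ∈ Icc 1 m | (n + 3 * k + ε : ℤ) + 2 ≤ n + 3 * k'} : Finset ℕ)
        = Icc (k + 1) m := by
      ext k'; simp only [mem_filter, mem_Icc]; omega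
    rw [htor_eq _ (by omega), torsionSum_alexanderK (by omega), hbeyond, htail, Nat.card_Icc]
    omega

/-- Torsion coefficients of the symmetrized Alexander polynomial of `K_{n,m}`:
with `P` as below, `a j` its coefficient of `t^j`, and
`t_i = Σ_{j>0} j·a_{|i|+j}`, for `0 ≤ i ≤ n-2` we have `t_i = m + (n-i)/2` when
`n-i` is even and `t_i = m + (n-i-1)/2` when `n-i` is odd, while for
`i = n+3k+ε`, `ε ∈ {-1,0,1}`, `0 ≤ k ≤ m-1`, we have `t_i = m-k`. -/
theorem stmt_13 (n m : ℕ) (hn : 2 ≤ n) (hm : 1 ≤ m)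
    (P : LaurentPolynomial ℤ)
    (hP : P = ((-1 : LaurentPolynomial ℤ)) ^ (n - 1)
        + ∑ i ∈ Icc 1 (n - 1), (-1 : LaurentPolynomial ℤ) ^ (n - i - 1) *
            (T (i : ℤ) + T (-(i : ℤ)))
        - ∑ k ∈ Icc 1 m, (T ((n : ℤ) + 3 * k - 2) + T (-((n : ℤ) + 3 * k - 2)))
        + ∑ k ∈ Icc 1 m, (T ((n : ℤ) + 3 * k - 1) + T (-((n : ℤ) + 3 * k - 1))))
    (a : ℤ → ℤ) (ha : ∀ j, a j = P.coeff j)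
    (tor : ℤ → ℤ)
    (htor : ∀ i, tor i = ∑ j ∈ Icc (1 : ℤ) ((n : ℤ) + 3 * m), j * a (|i| + j)) :
    (∀ i : ℤ, 0 ≤ i → i ≤ (n : ℤ) - 2 →
      (Even ((n : ℤ) - i) → tor i = m + ((n : ℤ) - i) / 2) ∧
      (Odd ((n : ℤ) - i) → tor i = m + ((n : ℤ) - i - 1) / 2)) ∧
    (∀ k ε : ℤ, 0 ≤ k → k ≤ (m : ℤ) - 1 → ε ∈ ({-1, 0, 1} : Set ℤ) →
      tor ((n : ℤ) + 3 * k + ε) = m - k) :=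
  stmt_13_general n m hn P hP a ha tor htor
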